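/- arXiv:1909.13483 — 3 statements merged into one kernel-verified Lean document; each statement's English description precedes it below -/
import Mathlib

section
/- For all smooth 1-periodic functions u, w : ℝ → ℝ one has ∫₀¹ (u(x) − u″(x))·(u′(x)·w(x) − w′(x)·u(x)) dx = ∫₀¹ (3·u(x)·u′(x) − 2·u′(x)·u″(x) − u(x)·u‴(x))·w(x) dx. -/
lemma periodic_deriv_aux (f : ℝ → ℝ) (hf : ∀ x, f (x + 1) = f x) (x : ℝ) :
    deriv f (x + 1) = deriv f x := by
  have h : (fun y => f (y + 1)) = f := funext hf
  rw [← deriv_comp_add_const, h]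

/-- With the inertia operator `A = 1 - D²` of the Camassa–Holm equation, the identity
`∫ (u - u'') (u' w - w' u) = ∫ (3 u u' - 2 u' u'' - u u''') w` holds for smooth
1-periodic functions, identifying the Euler–Arnold equation of the `H¹` metric on
`Diff^∞₊(S¹)` with the Camassa–Holm equation. -/
theorem camassa_holm_identity_circle
    (u w : ℝ → ℝ) (hu : ContDiff ℝ (⊤ : ℕ∞) u) (hw : ContDiff ℝ (⊤ : ℕ∞) w)
    (hup : ∀ x, u (x + 1) = u x) (hwp : ∀ x, w (x + 1) = w x) :
    ∫ x in (0:ℝ)..1, (u x - deriv (deriv u) x) * (deriv u x * w x - deriv w x * u x)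
      = ∫ x in (0:ℝ)..1,
          (3 * u x * deriv u x - 2 * deriv u x * deriv (deriv u) x
            - u x * deriv (deriv (deriv u)) x) * w x := by
  have hu0 : ContDiff ℝ (⊤ : ℕ∞) u := hu.of_le (by simp)
  have hw0 : ContDiff ℝ (⊤ : ℕ∞) w := hw.of_le (by simp)
  have hu1 : ContDiff ℝ (⊤ : ℕ∞) (deriv u) := (contDiff_infty_iff_deriv.mp hu0).2
  have hu2 : ContDiff ℝ (⊤ : ℕ∞) (deriv (deriv u)) := (contDiff_infty_iff_deriv.mp hu1).2
  have hu3 : ContDiff ℝ (⊤ : ℕ∞) (deriv (deriv (deriv u))) := (contDiff_infty_iff_deriv.mp hu2).2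
  have hw1 : ContDiff ℝ (⊤ : ℕ∞) (deriv w) := (contDiff_infty_iff_deriv.mp hw0).2
  set F : ℝ → ℝ := fun x => (u x * deriv (deriv u) x - u x * u x) * w x with hF
  have hder : ∀ x, HasDerivAt F
      ((u x - deriv (deriv u) x) * (deriv u x * w x - deriv w x * u x)
        - (3 * u x * deriv u x - 2 * deriv u x * deriv (deriv u) x
            - u x * deriv (deriv (deriv u)) x) * w x) x := by
    intro x
    have h1 : HasDerivAt u (deriv u x) x := (hu0.differentiable (by simp) x).hasDerivAt
    have h2 : HasDerivAt (deriv u) (deriv (deriv u) x) x :=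
      (hu1.differentiable (by simp) x).hasDerivAt
    have h3 : HasDerivAt (deriv (deriv u)) (deriv (deriv (deriv u)) x) x :=
      (hu2.differentiable (by simp) x).hasDerivAt
    have hw' : HasDerivAt w (deriv w x) x := (hw0.differentiable (by simp) x).hasDerivAt
    have := (((h1.mul h3).sub (h1.mul h1)).mul hw')
    refine this.congr_deriv ?_
    simp only [Pi.mul_apply, Pi.sub_apply]
    ring
  have hcont1 : Continuous fun x =>
      (u x - deriv (deriv u) x) * (deriv u x * w x - deriv w x * u x) := by
    exact ((hu0.continuous.sub hu2.continuous).mul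
      ((hu1.continuous.mul hw0.continuous).sub (hw1.continuous.mul hu0.continuous)))
  have hcont2 : Continuous fun x =>
      (3 * u x * deriv u x - 2 * deriv u x * deriv (deriv u) x
        - u x * deriv (deriv (deriv u)) x) * w x := by
    exact ((((continuous_const.mul hu0.continuous).mul hu1.continuous).sub
      ((continuous_const.mul hu1.continuous).mul hu2.continuous)).sub
      (hu0.continuous.mul hu3.continuous)).mul hw0.continuous
  have key : ∫ x in (0:ℝ)..1,
      ((u x - deriv (deriv u) x) * (deriv u x * w x - deriv w x * u x)
        - (3 * u x * deriv u x - 2 * deriv u x * deriv (deriv u) x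
            - u x * deriv (deriv (deriv u)) x) * w x) = F 1 - F 0 :=
    intervalIntegral.integral_eq_sub_of_hasDerivAt (fun x _ => hder x)
      ((hcont1.sub hcont2).intervalIntegrable 0 1)
  have hupP : Function.Periodic u 1 := hup
  have hF10 : F 1 = F 0 := by
    have h2p : deriv (deriv u) 1 = deriv (deriv u) 0 := by
      have := periodic_deriv_aux (deriv u) (periodic_deriv_aux u hup) 0
      simpa using this
    have hu10 : u 1 = u 0 := by simpa using hup 0
    have hw10 : w 1 = w 0 := by simpa using hwp 0
    simp [hF, h2p, hu10, hw10]
  have hsub := intervalIntegral.integral_sub (μ := MeasureTheory.volume)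
    (hcont1.intervalIntegrable 0 1) (hcont2.intervalIntegrable 0 1)
  rw [hsub, hF10, sub_self] at key
  linarith [key]
end

section
/- Let E be a real Banach space, U ⊆ E open, and g : U → (E →L[ℝ] E →L[ℝ] ℝ) a smooth map such that for every x ∈ U the continuous bilinear form g(x) is symmetric (g(x)(v)(w) = g(x)(w)(v)) and weakly nondegenerate (if g(x)(v)(u) = 0 for all u ∈ E then v = 0). Suppose S₁, S₂ : U × E → E satisfy, for all x ∈ U and all u, v, w ∈ E, (Dg(x)(u))(v)(S₁(x,v)) + g(x)(w)(S₁(x,v)) − (Dg(x)(S₁(x,v)))(v)(u) − g(x)(S₂(x,v))(u) = ½·(Dg(x)(u))(v)(v) + g(x)(v)(w), where Dg(x) denotes the Fréchet derivative of g at x. Then S₁(x,v) = v for all (x,v) ∈ U × E, and g(x)(S₂(x,v))(u) = ½·(Dg(x)(u))(v)(v) − (Dg(x)(v))(v)(u) for all u ∈ E. -/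
/-- Local form of the spray equation `i_F ω^g = dE` for a weak Riemannian metric `g` on
a Banach manifold: any vector field with local representative
`F(x,v) = (x, v, S₁(x,v), S₂(x,v))` satisfying the equation is symmetric
(`S₁(x,v) = v`), and its second component is determined by the metric. -/
theorem spray_equation_local_form
    {E : Type*} [NormedAddCommGroup E] [NormedSpace ℝ E] [CompleteSpace E]
    {U : Set E} (hU : IsOpen U)
    (g : E → E →L[ℝ] E →L[ℝ] ℝ) (hg : ContDiffOn ℝ (⊤ : ℕ∞) g U)
    (hsymm : ∀ x ∈ U, ∀ v w : E, g x v w = g x w v)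
    (hnondeg : ∀ x ∈ U, ∀ v : E, (∀ u : E, g x v u = 0) → v = 0)
    (S₁ S₂ : E × E → E)
    (heq : ∀ x ∈ U, ∀ u v w : E,
      fderiv ℝ g x u v (S₁ (x, v)) + g x w (S₁ (x, v))
          - fderiv ℝ g x (S₁ (x, v)) v u - g x (S₂ (x, v)) u
        = (1 / 2) * fderiv ℝ g x u v v + g x v w) :
    ∀ x ∈ U, ∀ v : E, S₁ (x, v) = v ∧
      ∀ u : E, g x (S₂ (x, v)) u
        = (1 / 2) * fderiv ℝ g x u v v - fderiv ℝ g x v v u := by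
  intro x hx v
  have h1 : ∀ w : E, g x w (S₁ (x, v)) = g x v w := by
    intro w
    have e := heq x hx 0 v w
    simpa using e
  have hS1 : S₁ (x, v) = v := by
    have hz : ∀ u : E, g x (S₁ (x, v) - v) u = 0 := by
      intro u
      have h2 : g x (S₁ (x, v)) u = g x v u := by
        rw [hsymm x hx (S₁ (x, v)) u, h1 u, hsymm x hx v u]
      simp [map_sub, h2]
    have := hnondeg x hx _ hz
    exact sub_eq_zero.mp this
  refine ⟨hS1, fun u => ?_⟩
  have e := heq x hx u v 0
  rw [hS1] at e
  simp at e
  linarith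
end

section
/- Let E be a real Banach space, U ⊆ E open, and g : U → (E →L[ℝ] E →L[ℝ] ℝ) a smooth map such that for every x ∈ U the continuous bilinear form g(x) is weakly nondegenerate (if g(x)(v)(u) = 0 for all u ∈ E then v = 0). Suppose S : U × E → E satisfies, for all x ∈ U and all u, v ∈ E, g(x)(S(x,v))(u) = ½·(Dg(x)(u))(v)(v) − (Dg(x)(v))(v)(u), where Dg(x) is the Fréchet derivative of g at x. Then S(x, λ • v) = λ² • S(x,v) for all x ∈ U, v ∈ E and λ ∈ ℝ. -/
/-- The second component `S` of the local representative of the vector field satisfying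
`i_F ω^g = dE` for a weak Riemannian metric `g` is quadratic (2-homogeneous) in the
fiber variable, so `F` satisfies the quadratic condition in the definition of a spray. -/
theorem spray_quadratic_condition
    {E : Type*} [NormedAddCommGroup E] [NormedSpace ℝ E] [CompleteSpace E]
    {U : Set E} (hU : IsOpen U)
    (g : E → E →L[ℝ] E →L[ℝ] ℝ) (hg : ContDiffOn ℝ (⊤ : ℕ∞) g U)
    (hnondeg : ∀ x ∈ U, ∀ v : E, (∀ u : E, g x v u = 0) → v = 0)
    (S : E × E → E)
    (heq : ∀ x ∈ U, ∀ u v : E,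
      g x (S (x, v)) u = (1 / 2) * fderiv ℝ g x u v v - fderiv ℝ g x v v u) :
    ∀ x ∈ U, ∀ (v : E) (lam : ℝ), S (x, lam • v) = lam ^ 2 • S (x, v) := by
  intro x hx v lam
  have key : ∀ u : E, g x (S (x, lam • v) - lam ^ 2 • S (x, v)) u = 0 := by
    intro u
    have h1 := heq x hx u (lam • v)
    have h2 := heq x hx u v
    simp only [map_sub, map_smul, map_smulₛₗ, ContinuousLinearMap.sub_apply,
      ContinuousLinearMap.smul_apply, RingHom.id_apply, smul_eq_mul] at h1 h2 ⊢
    rw [h1, h2]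
    ring
  have := hnondeg x hx _ key
  exact sub_eq_zero.mp this
end
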